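/- For S ⊆ F ⊆ V, let CC(F) be the union of S with the set of vertices of F joined to some vertex of S by a path of bidirected edges lying in F, and let T(F) be the set of ancestors of S in G[CC(F)]. Then S ⊆ T(F) ⊆ F, and every hedge formed for Q[S] in G that is contained in F is contained in T(F). -/

import Mathlib

/-- A semi-Markovian graph on vertex type `V`: a DAG of directed edges together with a
symmetric irreflexive relation of bidirected edges. `dir x y` means there is a directed
edge from `x` to `y`, i.e. `x` is a parent of `y`. -/
structure SemiMarkovian (V : Type*) where
  dir : V → V → Prop
  bid : V → V → Prop
  bid_symm : ∀ x y, bid x y → bid y x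
  bid_irrefl : ∀ x, ¬ bid x x
  acyclic : ∀ x, ¬ Relation.TransGen dir x x

namespace SemiMarkovian

variable {V : Type*}

/-- The induced subgraph of `G` on the vertex set `W`. -/
def induce (G : SemiMarkovian V) (W : Set V) : SemiMarkovian V where
  dir a b := a ∈ W ∧ b ∈ W ∧ G.dir a b
  bid a b := a ∈ W ∧ b ∈ W ∧ G.bid a b
  bid_symm := fun x y h => ⟨h.2.1, h.1, G.bid_symm x y h.2.2⟩
  bid_irrefl := fun x h => G.bid_irrefl x h.2.2
  acyclic := fun x h =>
    G.acyclic x (Relation.TransGen.mono (p := G.dir)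
      (fun a b (hab : a ∈ W ∧ b ∈ W ∧ G.dir a b) => hab.2.2) x x h)

/-- There is a directed path (possibly of length zero) from `x` to `y` all of whose
vertices lie in `F`. -/
def DirPathIn (G : SemiMarkovian V) (F : Set V) (x y : V) : Prop :=
  x ∈ F ∧ Relation.ReflTransGen (fun a b => b ∈ F ∧ G.dir a b) x y

/-- `x` and `y` are joined by a path of bidirected edges all of whose vertices lie in `F`. -/
def BidConnIn (G : SemiMarkovian V) (F : Set V) (x y : V) : Prop :=
  x ∈ F ∧ Relation.ReflTransGen (fun a b => b ∈ F ∧ G.bid a b) x y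

/-- `x` is an ancestor of the set `S` in `G[F]`. -/
def AncestorIn (G : SemiMarkovian V) (F S : Set V) (x : V) : Prop :=
  ∃ s ∈ S, G.DirPathIn F x s

/-- `G[F]` is a c-component: any two vertices of `F` are joined by a path of bidirected
edges all of whose vertices lie in `F`. -/
def CComponent (G : SemiMarkovian V) (F : Set V) : Prop :=
  ∀ x ∈ F, ∀ y ∈ F, G.BidConnIn F x y

/-- `F` is a hedge formed for `Q[S]` in `G`: `S ⊊ F`, every vertex of `F` is an ancestor of
`S` in `G[F]`, and `G[F]` is a c-component. -/
def IsHedge (G : SemiMarkovian V) (S F : Set V) : Prop :=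
  S ⊂ F ∧ (∀ x ∈ F, G.AncestorIn F S x) ∧ G.CComponent F

/-- The hedge hull of `S` in `G`: the union of `S` with all hedges formed for `Q[S]` in `G`. -/
def Hhull (G : SemiMarkovian V) (S : Set V) : Set V :=
  S ∪ ⋃₀ {F | G.IsHedge S F}

/-- Vertices outside `S` that are parents of some vertex of `S`. -/
def Pa (G : SemiMarkovian V) (S : Set V) : Set V :=
  {x | x ∉ S ∧ ∃ s ∈ S, G.dir x s}

/-- Vertices outside `S` that have a bidirected edge to some vertex of `S`. -/
def Bid (G : SemiMarkovian V) (S : Set V) : Set V :=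
  {x | x ∉ S ∧ ∃ s ∈ S, G.bid x s}

/-- `Pa↔(S) := Pa(S) ∩ Bid(S)`. -/
def PaBid (G : SemiMarkovian V) (S : Set V) : Set V := G.Pa S ∩ G.Bid S

end SemiMarkovian
/-- For `S ⊆ F ⊆ V`, with `CC(F)` the union of `S` with the vertices of `F`
joined to `S` by a bidirected path inside `F`, and `T(F)` the set of ancestors of `S` in
`G[CC(F)]`, we have `S ⊆ T(F) ⊆ F`, and every hedge formed for `Q[S]` in `G` contained in
`F` is contained in `T(F)`. -/
theorem hedge_step_invariant {V : Type*} [Fintype V] (G : SemiMarkovian V) (S F : Set V)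
    (hS : G.CComponent S) (hSF : S ⊆ F) (CC T : Set V)
    (hCC : CC = S ∪ {x ∈ F | ∃ s ∈ S, G.BidConnIn F x s})
    (hT : T = {x | G.AncestorIn CC S x}) :
    S ⊆ T ∧ T ⊆ F ∧ ∀ F', G.IsHedge S F' → F' ⊆ F → F' ⊆ T := by
  subst hCC hT
  have hCCF : (S ∪ {x ∈ F | ∃ s ∈ S, G.BidConnIn F x s}) ⊆ F := by
    rintro x (hx | ⟨hxF, -⟩)
    · exact hSF hx
    · exact hxF
  refine ⟨?_, ?_, ?_⟩
  · intro s hs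
    exact ⟨s, hs, Or.inl hs, Relation.ReflTransGen.refl⟩
  · rintro x ⟨s, hs, hxCC, -⟩
    exact hCCF hxCC
  · rintro F' ⟨hssub, hanc, hcc⟩ hF'F x hx
    -- F' ⊆ CC
    have hF'CC : F' ⊆ S ∪ {x ∈ F | ∃ s ∈ S, G.BidConnIn F x s} := by
      intro y hy
      obtain ⟨s, hsS, -⟩ := hanc y hy
      have hconn : G.BidConnIn F' y s := hcc y hy s (hssub.1 hsS)
      exact Or.inr ⟨hF'F hy, s, hsS, hF'F hy,
        Relation.ReflTransGen.mono (p := fun a b => b ∈ F ∧ G.bid a b)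
          (fun a b (h : b ∈ F' ∧ G.bid a b) => ⟨hF'F h.1, h.2⟩) _ _ hconn.2⟩
    obtain ⟨s, hsS, hxF', hpath⟩ := hanc x hx
    exact ⟨s, hsS, hF'CC hxF',
      Relation.ReflTransGen.mono
        (p := fun a b => b ∈ S ∪ {x ∈ F | ∃ s ∈ S, G.BidConnIn F x s} ∧ G.dir a b)
        (fun a b (h : b ∈ F' ∧ G.dir a b) => ⟨hF'CC h.1, h.2⟩) _ _ hpath⟩
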